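/- For every integer N ≥ 2 and every complete code (ℓ_1, …, ℓ_N) on N symbols, the maximum codeword length satisfies ℓ_n ≤ N − 1 for every n ∈ {1, …, N}. -/

import Mathlib

/-!
Let `L` be the largest length, attained at `j`. Multiplying Kraft's equality by `2 ^ L` writes
`2 ^ L - 1 = ∑_{i ≠ j} 2 ^ (L - ℓ i)` as a sum of `N - 1` powers of two. Since `2 ^ L - 1` has `L`
binary digits equal to one and the binary digit sum is subadditive (Legendre's formula), `L ≤ N - 1`.
-/

open Nat Finset

theorem Nat.sum_digits_add_le (p : ℕ) [Fact p.Prime] (a b : ℕ) :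
    (p.digits (a + b)).sum ≤ (p.digits a).sum + (p.digits b).sum := by
  have hval : padicValNat p a ! + padicValNat p b ! ≤ padicValNat p (a + b)! := by
    have hchoose : (a + b).choose b ≠ 0 := (choose_pos (le_add_left b a)).ne'
    rw [← add_choose_mul_factorial_mul_factorial,
      padicValNat.mul (mul_ne_zero hchoose (factorial_ne_zero a)) (factorial_ne_zero b),
      padicValNat.mul hchoose (factorial_ne_zero a)]
    omega
  have hlegendre := Nat.mul_le_mul_left (p - 1) hval
  rw [mul_add, sub_one_mul_padicValNat_factorial, sub_one_mul_padicValNat_factorial,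
    sub_one_mul_padicValNat_factorial] at hlegendre
  have := digit_sum_le p a
  have := digit_sum_le p b
  have := digit_sum_le p (a + b)
  omega

theorem Nat.sum_digits_base_pow {b : ℕ} (hb : 1 < b) (k : ℕ) : (b.digits (b ^ k)).sum = 1 := by
  simpa [digits_of_lt b 1 one_ne_zero hb] using
    congrArg List.sum (digits_base_pow_mul (k := k) hb one_pos)

theorem Nat.digits_base_pow_sub_one {b : ℕ} (hb : 1 < b) (k : ℕ) :
    b.digits (b ^ k - 1) = List.replicate k (b - 1) := by
  induction k with
  | zero => simp
  | succ k ih =>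
    rw [List.replicate_succ, ← ih, ← digits_add b hb (b - 1) _ (by omega) (Or.inl (by omega))]
    obtain ⟨c, hc⟩ : ∃ c, b ^ k = c + 1 := ⟨b ^ k - 1, by have := one_le_pow k b (by omega); omega⟩
    rw [pow_succ, hc, Nat.add_sub_cancel, add_mul, one_mul, mul_comm]
    congr 1
    omega

theorem Nat.le_card_of_sum_two_pow_eq_two_pow_sub_one {ι : Type*} {s : Finset ι} {e : ι → ℕ}
    {L : ℕ} (h : ∑ i ∈ s, 2 ^ e i = 2 ^ L - 1) : L ≤ #s :=
  calc L = (digits 2 (2 ^ L - 1)).sum := by simp [digits_base_pow_sub_one one_lt_two]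
    _ = (digits 2 (∑ i ∈ s, 2 ^ e i)).sum := by rw [h]
    _ ≤ ∑ i ∈ s, (digits 2 (2 ^ e i)).sum :=
      le_sum_of_subadditive (fun n => (digits 2 n).sum) (by simp) (sum_digits_add_le 2) _ _
    _ = #s := by simp only [sum_digits_base_pow one_lt_two, sum_const, smul_eq_mul, mul_one]

theorem sum_two_pow_sub_eq_two_pow_of_sum_inv_two_pow_eq_one {K ι : Type*} [Field K] [CharZero K]
    {s : Finset ι} {ℓ : ι → ℕ} {L : ℕ} (hL : ∀ i ∈ s, ℓ i ≤ L)
    (hkraft : ∑ i ∈ s, ((2 : K) ^ ℓ i)⁻¹ = 1) : ∑ i ∈ s, 2 ^ (L - ℓ i) = 2 ^ L := by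
  have hcast : ∑ i ∈ s, (2 : K) ^ (L - ℓ i) = 2 ^ L := by
    rw [← mul_one ((2 : K) ^ L), ← hkraft, mul_sum]
    exact sum_congr rfl fun i hi => pow_sub₀ _ two_ne_zero (hL i hi)
  exact_mod_cast hcast

theorem add_one_le_card_of_sum_inv_two_pow_eq_one {K ι : Type*} [Field K] [CharZero K]
    [Fintype ι] {ℓ : ι → ℕ} (hkraft : ∑ i, ((2 : K) ^ ℓ i)⁻¹ = 1) (i : ι) :
    ℓ i + 1 ≤ Fintype.card ι := by
  classical
  obtain ⟨j, -, hj⟩ := exists_max_image univ ℓ ⟨i, mem_univ i⟩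
  have hsum := sum_two_pow_sub_eq_two_pow_of_sum_inv_two_pow_eq_one (fun m _ => hj m (mem_univ m))
    hkraft
  rw [← add_sum_erase _ _ (mem_univ j), Nat.sub_self, pow_zero] at hsum
  calc ℓ i + 1 ≤ ℓ j + 1 := by gcongr; exact hj i (mem_univ i)
    _ ≤ #(univ.erase j) + 1 := by
      gcongr
      exact le_card_of_sum_two_pow_eq_two_pow_sub_one (e := fun m => ℓ j - ℓ m) (by omega)
    _ = Fintype.card ι := card_erase_add_one (mem_univ j)

theorem complete_code_max_length_le_general (N : ℕ) (ℓ : Fin N → ℕ)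
    (hkraft : ∑ n, ((2 : ℚ) ^ ℓ n)⁻¹ = 1) :
    ∀ n, ℓ n ≤ N - 1 := by
  intro n
  have := add_one_le_card_of_sum_inv_two_pow_eq_one hkraft n
  rw [Fintype.card_fin] at this
  omega

/-- **Theorem 1 of the paper.** For every integer `N ≥ 2` and every complete code
`(ℓ 1, …, ℓ N)` on `N` symbols (positive codeword lengths satisfying Kraft's
inequality with equality), every codeword length is at most `N - 1`. -/
theorem complete_code_max_length_le (N : ℕ) (hN : 2 ≤ N) (ℓ : Fin N → ℕ)
    (hpos : ∀ n, 0 < ℓ n)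
    (hkraft : ∑ n, ((2 : ℚ) ^ ℓ n)⁻¹ = 1) :
    ∀ n, ℓ n ≤ N - 1 :=
  complete_code_max_length_le_general N ℓ hkraft
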